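/- Let n ≥ 2 and p be integers with 1 ≤ p ≤ n−1, let ℓ ∈ ℝ, and let I ⊆ ℝ be an open interval with 0 ∉ I, 1/2 ∉ I and 1 ∉ I. Suppose f, f̂ : I → ℝ are four times differentiable and satisfy, for all z ∈ I, the coupled system z(1−z)f''(z) + (n/2)(1−2z)f'(z) = [ ℓ + p(1/(2z(1−z)) + n−p−1) ]·f(z) − (p(1−2z)/(2z(1−z)))·f̂(z) and z(1−z)f̂''(z) + (n/2)(1−2z)f̂'(z) = [ ℓ + (n−p)(1/(2z(1−z)) + p−1) ]·f̂(z) − ((n−p)(1−2z)/(2z(1−z)))·f(z). Then f satisfies, for all z ∈ I, the fourth-order linear equation f''''(z) + Q₃(z)f'''(z) + Q₂(z)f''(z) + Q₁(z)f'(z) + Q₀(z)f(z) = 0, where Q₃(z) = (n+4)/(z−1) + (n+4)/z + 4/(1−2z); Q₂(z) = [ 16(n²+2(p+3)n−2p²+2(ℓ+3))z⁴ + 32(2p²−n²−2(p+3)n−2(ℓ+3))z³ + 8(3n²+5(p+3)n+3n−5p²+ℓ+4(ℓ+3)+6)z² + 8(p²−n²−(p+3)n−3n−ℓ−6)z + n²+6n+8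 ] / (16z⁶−48z⁵+52z⁴−24z³+4z²); Q₁(z) = [ 2pn²+n²−2p²n+4pn+2ℓn+2n−4p²+4ℓ + 4(−2pn²−n²+2p²n−2pn−2ℓn−2n+2p²+2p−2ℓ)z + 4(2pn²+n²−2p²n+2pn+2ℓn+2n−2p²−2p+2ℓ)z² ] / (4z⁵−10z⁴+8z³−2z²); Q₀(z) = [ p⁴−2np³+n²p²−2ℓp²+p²−2np+2nℓp−2p+ℓ²−2ℓ + 4(−p⁴+2np³−n²p²+2ℓp²+p²−2nℓp−ℓ²)z + 4(p⁴−2np³+n²p²−2ℓp²−p²+2nℓp+ℓ²)z² ] / (4z⁶−12z⁵+13z⁴−6z³+z²). -/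

import Mathlib

/-- Coefficient Q₃ of the fourth-order radial equation. -/
noncomputable def Q3 (n : ℝ) (z : ℝ) : ℝ :=
  (n + 4) / (z - 1) + (n + 4) / z + 4 / (1 - 2 * z)

/-- Coefficient Q₂ of the fourth-order radial equation. -/
noncomputable def Q2 (n p ℓ : ℝ) (z : ℝ) : ℝ :=
  (16 * (n ^ 2 + 2 * (p + 3) * n - 2 * p ^ 2 + 2 * (ℓ + 3)) * z ^ 4
    + 32 * (2 * p ^ 2 - n ^ 2 - 2 * (p + 3) * n - 2 * (ℓ + 3)) * z ^ 3
    + 8 * (3 * n ^ 2 + 5 * (p + 3) * n + 3 * n - 5 * p ^ 2 + ℓ + 4 * (ℓ + 3) + 6) * z ^ 2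
    + 8 * (p ^ 2 - n ^ 2 - (p + 3) * n - 3 * n - ℓ - 6) * z
    + n ^ 2 + 6 * n + 8) /
  (16 * z ^ 6 - 48 * z ^ 5 + 52 * z ^ 4 - 24 * z ^ 3 + 4 * z ^ 2)

/-- Coefficient Q₁ of the fourth-order radial equation. -/
noncomputable def Q1 (n p ℓ : ℝ) (z : ℝ) : ℝ :=
  (2 * p * n ^ 2 + n ^ 2 - 2 * p ^ 2 * n + 4 * p * n + 2 * ℓ * n + 2 * n - 4 * p ^ 2 + 4 * ℓ
    + 4 * (-(2 * p * n ^ 2) - n ^ 2 + 2 * p ^ 2 * n - 2 * p * n - 2 * ℓ * n - 2 * n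
        + 2 * p ^ 2 + 2 * p - 2 * ℓ) * z
    + 4 * (2 * p * n ^ 2 + n ^ 2 - 2 * p ^ 2 * n + 2 * p * n + 2 * ℓ * n + 2 * n
        - 2 * p ^ 2 - 2 * p + 2 * ℓ) * z ^ 2) /
  (4 * z ^ 5 - 10 * z ^ 4 + 8 * z ^ 3 - 2 * z ^ 2)

/-- Coefficient Q₀ of the fourth-order radial equation. -/
noncomputable def Q0 (n p ℓ : ℝ) (z : ℝ) : ℝ :=
  (p ^ 4 - 2 * n * p ^ 3 + n ^ 2 * p ^ 2 - 2 * ℓ * p ^ 2 + p ^ 2 - 2 * n * p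
      + 2 * n * ℓ * p - 2 * p + ℓ ^ 2 - 2 * ℓ
    + 4 * (-(p ^ 4) + 2 * n * p ^ 3 - n ^ 2 * p ^ 2 + 2 * ℓ * p ^ 2 + p ^ 2
        - 2 * n * ℓ * p - ℓ ^ 2) * z
    + 4 * (p ^ 4 - 2 * n * p ^ 3 + n ^ 2 * p ^ 2 - 2 * ℓ * p ^ 2 - p ^ 2
        + 2 * n * ℓ * p + ℓ ^ 2) * z ^ 2) /
  (4 * z ^ 6 - 12 * z ^ 5 + 13 * z ^ 4 - 6 * z ^ 3 + z ^ 2)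

/-!
Multiplied by `2z(1 - z)`, the two equations become polynomial relations `R = 0` and `S = 0`, and
`R` contains `f̂` only through the term `p(1 - 2z) f̂`. As `R` vanishes on an open interval,
so do `R'` and `R''`. Writing `D = z(1 - z)` and `s = 1 - 2z`, subtract from `2D²s² R''` the
multiple `p s³ S` to cancel `f̂''`; the coefficients of `R'` and `R` are
then forced by cancelling `f̂'` and `f̂`, and what is left is `4D⁴s²` times the fourth-order
operator.
-/

theorem HasDerivAt.eq_zero_of_eqOn_zero {𝕜 F : Type*} [NontriviallyNormedField 𝕜]
    [NormedAddCommGroup F] [NormedSpace 𝕜 F] {f : 𝕜 → F} {f' : F} {x : 𝕜} {s : Set 𝕜}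
    (h : HasDerivAt f f' x) (hs : IsOpen s) (hf : Set.EqOn f 0 s) (hx : x ∈ s) : f' = 0 :=
  h.unique ((hasDerivAt_const x 0).congr_of_eventuallyEq
    (Filter.eventuallyEq_of_mem (hs.mem_nhds hx) hf))

theorem hasDerivAt_mul_one_sub (z : ℝ) : HasDerivAt (fun w => w * (1 - w)) (1 - 2 * z) z :=
  ((hasDerivAt_id' z).fun_mul ((hasDerivAt_id' z).const_sub 1)).congr_deriv (by ring)

theorem hasDerivAt_one_sub_two_mul (z : ℝ) : HasDerivAt (fun w => 1 - 2 * w) (-2) z :=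
  (((hasDerivAt_id' z).const_mul 2).const_sub 1).congr_deriv (by ring)

/-- `2z(1 - z)` times an equation of the system, on the values `u₀, u₁, u₂` of `u, u', u''` and `v₀`
of `v`: with `m = p` the equation for `(u, v) = (f, f̂)`, with `m = n - p` the one for `(f̂, f)`. -/
def radialRelation (n m ℓ z u₀ u₁ u₂ v₀ : ℝ) : ℝ :=
  2 * (z * (1 - z)) ^ 2 * u₂ + n * (z * (1 - z)) * (1 - 2 * z) * u₁
    - (2 * (z * (1 - z)) * (ℓ + m * (n - m - 1)) + m) * u₀ + m * (1 - 2 * z) * v₀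

def radialRelationDeriv (n m ℓ z u₀ u₁ u₂ u₃ v₀ v₁ : ℝ) : ℝ :=
  2 * (z * (1 - z)) ^ 2 * u₃ + (n + 4) * (z * (1 - z)) * (1 - 2 * z) * u₂
    + (n * (1 - 6 * (z * (1 - z))) - 2 * (z * (1 - z)) * (ℓ + m * (n - m - 1)) - m) * u₁
    - 2 * (ℓ + m * (n - m - 1)) * (1 - 2 * z) * u₀ + m * (1 - 2 * z) * v₁ - 2 * m * v₀

def radialRelationDeriv2 (n m ℓ z u₀ u₁ u₂ u₃ u₄ v₁ v₂ : ℝ) : ℝ :=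
  2 * (z * (1 - z)) ^ 2 * u₄ + (n + 8) * (z * (1 - z)) * (1 - 2 * z) * u₃
    + ((2 * n + 4) * (1 - 6 * (z * (1 - z))) - 2 * (z * (1 - z)) * (ℓ + m * (n - m - 1)) - m) * u₂
    - (6 * n + 4 * (ℓ + m * (n - m - 1))) * (1 - 2 * z) * u₁ + 4 * (ℓ + m * (n - m - 1)) * u₀
    + m * (1 - 2 * z) * v₂ - 4 * m * v₁

section

variable {n m ℓ z : ℝ}

theorem radialRelation_eq_zero {u₀ u₁ u₂ v₀ : ℝ} (hz₀ : z ≠ 0) (hz₁ : z ≠ 1)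
    (h : z * (1 - z) * u₂ + (n / 2) * (1 - 2 * z) * u₁
      = (ℓ + m * (1 / (2 * z * (1 - z)) + n - m - 1)) * u₀
        - (m * (1 - 2 * z) / (2 * z * (1 - z))) * v₀) :
    radialRelation n m ℓ z u₀ u₁ u₂ v₀ = 0 := by
  have hz₁' : 1 - z ≠ 0 := sub_ne_zero.mpr hz₁.symm
  field_simp at h
  unfold radialRelation
  linear_combination h

theorem hasDerivAt_radialRelation {u₀ u₁ u₂ v₀ : ℝ → ℝ} {u₃ v₁ : ℝ}
    (hu₀ : HasDerivAt u₀ (u₁ z) z) (hu₁ : HasDerivAt u₁ (u₂ z) z) (hu₂ : HasDerivAt u₂ u₃ z)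
    (hv₀ : HasDerivAt v₀ v₁ z) :
    HasDerivAt (fun w => radialRelation n m ℓ w (u₀ w) (u₁ w) (u₂ w) (v₀ w))
      (radialRelationDeriv n m ℓ z (u₀ z) (u₁ z) (u₂ z) u₃ (v₀ z) v₁) z := by
  have hD := hasDerivAt_mul_one_sub z
  have hs := hasDerivAt_one_sub_two_mul z
  refine (((((hD.fun_pow 2).const_mul 2).fun_mul hu₂).fun_add
    (((hD.const_mul n).fun_mul hs).fun_mul hu₁)).fun_sub
    ((((hD.const_mul 2).mul_const (ℓ + m * (n - m - 1))).add_const m).fun_mul hu₀) |>.fun_add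
    ((hs.const_mul m).fun_mul hv₀)).congr_deriv ?_
  simp only [radialRelationDeriv]
  ring

theorem hasDerivAt_radialRelationDeriv {u₀ u₁ u₂ u₃ v₀ v₁ : ℝ → ℝ} {u₄ v₂ : ℝ}
    (hu₀ : HasDerivAt u₀ (u₁ z) z) (hu₁ : HasDerivAt u₁ (u₂ z) z)
    (hu₂ : HasDerivAt u₂ (u₃ z) z) (hu₃ : HasDerivAt u₃ u₄ z)
    (hv₀ : HasDerivAt v₀ (v₁ z) z) (hv₁ : HasDerivAt v₁ v₂ z) :
    HasDerivAt (fun w => radialRelationDeriv n m ℓ w (u₀ w) (u₁ w) (u₂ w) (u₃ w) (v₀ w) (v₁ w))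
      (radialRelationDeriv2 n m ℓ z (u₀ z) (u₁ z) (u₂ z) (u₃ z) u₄ (v₁ z) v₂) z := by
  have hD := hasDerivAt_mul_one_sub z
  have hs := hasDerivAt_one_sub_two_mul z
  refine ((((((hD.fun_pow 2).const_mul 2).fun_mul hu₃).fun_add
    (((hD.const_mul (n + 4)).fun_mul hs).fun_mul hu₂)).fun_add
    (((((hD.const_mul 6).const_sub 1).const_mul n).fun_sub
      ((hD.const_mul 2).mul_const (ℓ + m * (n - m - 1)))).sub_const m |>.fun_mul hu₁)).fun_sub
    ((hs.const_mul (2 * (ℓ + m * (n - m - 1)))).fun_mul hu₀) |>.fun_add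
    ((hs.const_mul m).fun_mul hv₁) |>.fun_sub (hv₀.const_mul (2 * m))).congr_deriv ?_
  simp only [radialRelationDeriv2]
  ring

end

theorem fourthOrder_eq_combination {n p ℓ z f₀ f₁ f₂ f₃ f₄ g₀ g₁ g₂ : ℝ} (hz₀ : z ≠ 0)
    (hz₁ : z ≠ 1) (hz : 1 - 2 * z ≠ 0) :
    f₄ + Q3 n z * f₃ + Q2 n p ℓ z * f₂ + Q1 n p ℓ z * f₁ + Q0 n p ℓ z * f₀
      = (2 * (z * (1 - z)) ^ 2 * (1 - 2 * z) ^ 2 * radialRelationDeriv2 n p ℓ z f₀ f₁ f₂ f₃ f₄ g₁ g₂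
        + z * (1 - z) * (1 - 2 * z) * (8 * (z * (1 - z)) + n * (1 - 2 * z) ^ 2)
          * radialRelationDeriv n p ℓ z f₀ f₁ f₂ f₃ g₀ g₁
        + (16 * (z * (1 - z)) ^ 2 + 2 * n * (z * (1 - z)) * (1 - 2 * z) ^ 2
          - (1 - 2 * z) ^ 2 * (2 * (z * (1 - z)) * (ℓ + (n - p) * (p - 1)) + (n - p)))
          * radialRelation n p ℓ z f₀ f₁ f₂ g₀
        - p * (1 - 2 * z) ^ 3 * radialRelation n (n - p) ℓ z g₀ g₁ g₂ f₀)
        / (4 * (z * (1 - z)) ^ 4 * (1 - 2 * z) ^ 2) := by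
  have hz₁' : z - 1 ≠ 0 := sub_ne_zero.mpr hz₁
  have hz₁'' : 1 - z ≠ 0 := sub_ne_zero.mpr hz₁.symm
  have hd₂ : (16 : ℝ) * z ^ 6 - 48 * z ^ 5 + 52 * z ^ 4 - 24 * z ^ 3 + 4 * z ^ 2 ≠ 0 := by
    rw [show (16 : ℝ) * z ^ 6 - 48 * z ^ 5 + 52 * z ^ 4 - 24 * z ^ 3 + 4 * z ^ 2
      = 4 * (z * (1 - z)) ^ 2 * (1 - 2 * z) ^ 2 by ring]
    positivity
  have hd₁ : (4 : ℝ) * z ^ 5 - 10 * z ^ 4 + 8 * z ^ 3 - 2 * z ^ 2 ≠ 0 := by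
    rw [show (4 : ℝ) * z ^ 5 - 10 * z ^ 4 + 8 * z ^ 3 - 2 * z ^ 2
      = -(2 * (z * (1 - z)) ^ 2 * (1 - 2 * z)) by ring]
    simp [hz₀, hz₁'', hz]
  have hd₀ : (4 : ℝ) * z ^ 6 - 12 * z ^ 5 + 13 * z ^ 4 - 6 * z ^ 3 + z ^ 2 ≠ 0 := by
    rw [show (4 : ℝ) * z ^ 6 - 12 * z ^ 5 + 13 * z ^ 4 - 6 * z ^ 3 + z ^ 2
      = (z * (1 - z)) ^ 2 * (1 - 2 * z) ^ 2 by ring]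
    positivity
  have hQ₃₁ := div_mul_cancel₀ (n + 4) hz₁'
  have hQ₃₂ := div_mul_cancel₀ (n + 4) hz₀
  have hQ₃₃ := div_mul_cancel₀ 4 hz
  have hQ₂ : Q2 n p ℓ z * _ = _ := div_mul_cancel₀ _ hd₂
  have hQ₁ : Q1 n p ℓ z * _ = _ := div_mul_cancel₀ _ hd₁
  have hQ₀ : Q0 n p ℓ z * _ = _ := div_mul_cancel₀ _ hd₀
  rw [eq_div_iff (by positivity), Q3]
  simp only [radialRelation, radialRelationDeriv, radialRelationDeriv2]
  linear_combination (-4 * z ^ 4 * (1 - z) ^ 3 * (1 - 2 * z) ^ 2 * f₃) * hQ₃₁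
    + (4 * z ^ 3 * (1 - z) ^ 4 * (1 - 2 * z) ^ 2 * f₃) * hQ₃₂
    + (4 * (z * (1 - z)) ^ 4 * (1 - 2 * z) * f₃) * hQ₃₃
    + ((z * (1 - z)) ^ 2 * f₂) * hQ₂ - (2 * (z * (1 - z)) ^ 2 * (1 - 2 * z) * f₁) * hQ₁
    + (4 * (z * (1 - z)) ^ 2 * f₀) * hQ₀

theorem stmt_19_general (n p : ℤ) (ℓ : ℝ)
    (a b : ℝ) (h0 : (0 : ℝ) ∉ Set.Ioo a b) (hhalf : (1 / 2 : ℝ) ∉ Set.Ioo a b)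
    (h1 : (1 : ℝ) ∉ Set.Ioo a b)
    (f fh : ℝ → ℝ)
    (hf1 : ∀ z ∈ Set.Ioo a b, DifferentiableAt ℝ f z)
    (hf2 : ∀ z ∈ Set.Ioo a b, DifferentiableAt ℝ (deriv f) z)
    (hf3 : ∀ z ∈ Set.Ioo a b, DifferentiableAt ℝ (deriv (deriv f)) z)
    (hf4 : ∀ z ∈ Set.Ioo a b, DifferentiableAt ℝ (deriv (deriv (deriv f))) z)
    (hfh1 : ∀ z ∈ Set.Ioo a b, DifferentiableAt ℝ fh z)
    (hfh2 : ∀ z ∈ Set.Ioo a b, DifferentiableAt ℝ (deriv fh) z)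
    (heq1 : ∀ z ∈ Set.Ioo a b,
      z * (1 - z) * deriv (deriv f) z + ((n : ℝ) / 2) * (1 - 2 * z) * deriv f z
        = (ℓ + (p : ℝ) * (1 / (2 * z * (1 - z)) + (n : ℝ) - (p : ℝ) - 1)) * f z
          - ((p : ℝ) * (1 - 2 * z) / (2 * z * (1 - z))) * fh z)
    (heq2 : ∀ z ∈ Set.Ioo a b,
      z * (1 - z) * deriv (deriv fh) z + ((n : ℝ) / 2) * (1 - 2 * z) * deriv fh z
        = (ℓ + ((n : ℝ) - (p : ℝ)) * (1 / (2 * z * (1 - z)) + (p : ℝ) - 1)) * fh z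
          - (((n : ℝ) - (p : ℝ)) * (1 - 2 * z) / (2 * z * (1 - z))) * f z) :
    ∀ z ∈ Set.Ioo a b,
      deriv (deriv (deriv (deriv f))) z
          + Q3 (n : ℝ) z * deriv (deriv (deriv f)) z
          + Q2 (n : ℝ) (p : ℝ) ℓ z * deriv (deriv f) z
          + Q1 (n : ℝ) (p : ℝ) ℓ z * deriv f z
          + Q0 (n : ℝ) (p : ℝ) ℓ z * f z = 0 := by
  have hz₀ : ∀ z ∈ Set.Ioo a b, z ≠ 0 := fun z hz h => h0 (h ▸ hz)
  have hz₁ : ∀ z ∈ Set.Ioo a b, z ≠ 1 := fun z hz h => h1 (h ▸ hz)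
  have hR : ∀ w ∈ Set.Ioo a b,
      radialRelation n p ℓ w (f w) (deriv f w) (deriv (deriv f) w) (fh w) = 0 := fun w hw =>
    radialRelation_eq_zero (hz₀ w hw) (hz₁ w hw) (heq1 w hw)
  have hS : ∀ w ∈ Set.Ioo a b,
      radialRelation n (n - p) ℓ w (fh w) (deriv fh w) (deriv (deriv fh) w) (f w) = 0 :=
    fun w hw => radialRelation_eq_zero (hz₀ w hw) (hz₁ w hw) ((heq2 w hw).trans (by ring))
  have hR' : ∀ w ∈ Set.Ioo a b, radialRelationDeriv n p ℓ w (f w) (deriv f w) (deriv (deriv f) w)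
      (deriv (deriv (deriv f)) w) (fh w) (deriv fh w) = 0 := fun w hw =>
    (hasDerivAt_radialRelation (hf1 w hw).hasDerivAt (hf2 w hw).hasDerivAt (hf3 w hw).hasDerivAt
      (hfh1 w hw).hasDerivAt).eq_zero_of_eqOn_zero isOpen_Ioo hR hw
  intro z hz
  have hR'' := (hasDerivAt_radialRelationDeriv (hf1 z hz).hasDerivAt (hf2 z hz).hasDerivAt
    (hf3 z hz).hasDerivAt (hf4 z hz).hasDerivAt (hfh1 z hz).hasDerivAt
    (hfh2 z hz).hasDerivAt).eq_zero_of_eqOn_zero isOpen_Ioo hR' hz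
  have hs : 1 - 2 * z ≠ 0 := fun h => hhalf (by convert hz using 1; linarith)
  rw [fourthOrder_eq_combination (g₀ := fh z) (g₁ := deriv fh z) (g₂ := deriv (deriv fh) z)
    (hz₀ z hz) (hz₁ z hz) hs, hR z hz, hR' z hz, hR'', hS z hz]
  simp

/-- eliminating f̂ from the coupled radial system for the Hodge Laplacian on
p-forms on a product space yields a fourth-order Fuchsian equation (a fourth-order analogue
of the Heun equation) with coefficients Q₀, Q₁, Q₂, Q₃. -/
theorem stmt_19 (n p : ℤ) (hn : 2 ≤ n) (hp : 1 ≤ p) (hpn : p ≤ n - 1) (ℓ : ℝ)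
    (a b : ℝ) (h0 : (0 : ℝ) ∉ Set.Ioo a b) (hhalf : (1 / 2 : ℝ) ∉ Set.Ioo a b)
    (h1 : (1 : ℝ) ∉ Set.Ioo a b)
    (f fh : ℝ → ℝ)
    (hf1 : ∀ z ∈ Set.Ioo a b, DifferentiableAt ℝ f z)
    (hf2 : ∀ z ∈ Set.Ioo a b, DifferentiableAt ℝ (deriv f) z)
    (hf3 : ∀ z ∈ Set.Ioo a b, DifferentiableAt ℝ (deriv (deriv f)) z)
    (hf4 : ∀ z ∈ Set.Ioo a b, DifferentiableAt ℝ (deriv (deriv (deriv f))) z)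
    (hfh1 : ∀ z ∈ Set.Ioo a b, DifferentiableAt ℝ fh z)
    (hfh2 : ∀ z ∈ Set.Ioo a b, DifferentiableAt ℝ (deriv fh) z)
    (hfh3 : ∀ z ∈ Set.Ioo a b, DifferentiableAt ℝ (deriv (deriv fh)) z)
    (hfh4 : ∀ z ∈ Set.Ioo a b, DifferentiableAt ℝ (deriv (deriv (deriv fh))) z)
    (heq1 : ∀ z ∈ Set.Ioo a b,
      z * (1 - z) * deriv (deriv f) z + ((n : ℝ) / 2) * (1 - 2 * z) * deriv f z
        = (ℓ + (p : ℝ) * (1 / (2 * z * (1 - z)) + (n : ℝ) - (p : ℝ) - 1)) * f z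
          - ((p : ℝ) * (1 - 2 * z) / (2 * z * (1 - z))) * fh z)
    (heq2 : ∀ z ∈ Set.Ioo a b,
      z * (1 - z) * deriv (deriv fh) z + ((n : ℝ) / 2) * (1 - 2 * z) * deriv fh z
        = (ℓ + ((n : ℝ) - (p : ℝ)) * (1 / (2 * z * (1 - z)) + (p : ℝ) - 1)) * fh z
          - (((n : ℝ) - (p : ℝ)) * (1 - 2 * z) / (2 * z * (1 - z))) * f z) :
    ∀ z ∈ Set.Ioo a b,
      deriv (deriv (deriv (deriv f))) z
          + Q3 (n : ℝ) z * deriv (deriv (deriv f)) z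
          + Q2 (n : ℝ) (p : ℝ) ℓ z * deriv (deriv f) z
          + Q1 (n : ℝ) (p : ℝ) ℓ z * deriv f z
          + Q0 (n : ℝ) (p : ℝ) ℓ z * f z = 0 :=
  stmt_19_general n p ℓ a b h0 hhalf h1 f fh hf1 hf2 hf3 hf4 hfh1 hfh2 heq1 heq2
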